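/- Performing ℓ-pushes for each ℓ ∈ {−3,−2,−1,0,1,2,3} sequentially, in any order, on an initially 0-stable configuration on the infinite directed path yields a ⟦−3,3⟧-stable configuration, i.e., one that is k-stable for all k with |k| ≤ 3. -/

import Mathlib

open scoped Classical

/-- All occupied slots `(v,i)` have level `1 ≤ i ≤ L`. -/
def SlotsOK (L : ℕ) (c : Set (ℤ × ℕ)) : Prop :=
  ∀ p ∈ c, 1 ≤ p.2 ∧ p.2 ≤ L

/-- A configuration is `k`-stable if every token at slot `(v,i)` with `i ≥ 2`
has a token at slot `(v+k, i−1)`. -/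
def KStable (c : Set (ℤ × ℕ)) (k : ℤ) : Prop :=
  ∀ (v : ℤ) (i : ℕ), (v, i) ∈ c → 2 ≤ i → (v + k, i - 1) ∈ c

/-- Number of tokens on the `ℓ`-diagonal `S(v,ℓ) = ((v−ℓ,1), …, (v−Lℓ,L))`. -/
noncomputable def diagCount (L : ℕ) (c : Set (ℤ × ℕ)) (ℓ v : ℤ) : ℕ :=
  ((Finset.Icc 1 L).filter (fun (j : ℕ) => ((v - (j : ℤ) * ℓ, j) : ℤ × ℕ) ∈ c)).card

/-- The configuration after an `ℓ`-push: on each `ℓ`-diagonal containing `m`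
tokens, exactly the first `m` slots of the diagonal are occupied. -/
def pushed (L : ℕ) (c : Set (ℤ × ℕ)) (ℓ : ℤ) : Set (ℤ × ℕ) :=
  {p | 1 ≤ p.2 ∧ p.2 ≤ L ∧ p.2 ≤ diagCount L c ℓ (p.1 + (p.2 : ℤ) * ℓ)}

/-
An `ℓ`-push fills each `ℓ`-diagonal from level 1 upwards, and the slot one level below `(v, i)`
on its `ℓ`-diagonal is `(v + ℓ, i - 1)`; so the result is `ℓ`-stable whatever the input.
If the input is `k`-stable, every token of an `ℓ`-diagonal above level 1 has a `k`-neighbour one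
level below, and these neighbours lie on the `ℓ`-diagonal shifted by `k - ℓ`. That diagonal thus
holds at most one token fewer, which is exactly `k`-stability of the pushed configuration.
Hence each push keeps the stabilities already achieved and adds its own.
-/

lemma mem_pushed_iff {L : ℕ} {c : Set (ℤ × ℕ)} {ℓ v : ℤ} {i : ℕ} :
    (v, i) ∈ pushed L c ℓ ↔ 1 ≤ i ∧ i ≤ L ∧ i ≤ diagCount L c ℓ (v + i * ℓ) :=
  Iff.rfl

lemma KStable.diagCount_le {c : Set (ℤ × ℕ)} {k : ℤ} (hk : KStable c k) (L : ℕ) (ℓ w : ℤ) :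
    diagCount L c ℓ w ≤ diagCount L c ℓ (w + k - ℓ) + 1 := by
  set A := (Finset.Icc 1 L).filter (fun j : ℕ => ((w - j * ℓ, j) : ℤ × ℕ) ∈ c)
  set B := (Finset.Icc 1 L).filter (fun j : ℕ => ((w + k - ℓ - j * ℓ, j) : ℤ × ℕ) ∈ c)
  have hAB : A ⊆ insert (1 : ℕ) (B.image (· + 1)) := by
    intro j hj
    simp only [A, Finset.mem_filter, Finset.mem_Icc] at hj
    obtain ⟨⟨hj1, hjL⟩, hjc⟩ := hj
    rcases eq_or_lt_of_le hj1 with rfl | hj2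
    · exact Finset.mem_insert_self _ _
    refine Finset.mem_insert_of_mem (Finset.mem_image.2 ⟨j - 1, ?_, by omega⟩)
    have hshift : w + k - ℓ - ((j - 1 : ℕ) : ℤ) * ℓ = w - j * ℓ + k := by
      push_cast [Nat.cast_sub hj1]; ring
    simp only [B, Finset.mem_filter, Finset.mem_Icc, hshift]
    exact ⟨⟨by omega, by omega⟩, hk _ _ hjc hj2⟩
  calc A.card ≤ (insert 1 (B.image (· + 1))).card := Finset.card_le_card hAB
    _ ≤ (B.image (· + 1)).card + 1 := Finset.card_insert_le _ _
    _ ≤ B.card + 1 := Nat.add_le_add_right Finset.card_image_le 1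

lemma kStable_pushed_self (L : ℕ) (c : Set (ℤ × ℕ)) (ℓ : ℤ) : KStable (pushed L c ℓ) ℓ := by
  intro v i hv hi
  obtain ⟨-, hiL, hcount⟩ := mem_pushed_iff.1 hv
  have hdiag : v + ℓ + ((i - 1 : ℕ) : ℤ) * ℓ = v + i * ℓ := by
    push_cast [Nat.cast_sub (by omega : 1 ≤ i)]; ring
  exact mem_pushed_iff.2 ⟨by omega, by omega, by rw [hdiag]; omega⟩

lemma KStable.pushed {c : Set (ℤ × ℕ)} {k : ℤ} (hk : KStable c k) (L : ℕ) (ℓ : ℤ) :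
    KStable (pushed L c ℓ) k := by
  intro v i hv hi
  obtain ⟨-, hiL, hcount⟩ := mem_pushed_iff.1 hv
  have hdiag : v + k + ((i - 1 : ℕ) : ℤ) * ℓ = v + i * ℓ + k - ℓ := by
    push_cast [Nat.cast_sub (by omega : 1 ≤ i)]; ring
  have := hk.diagCount_le L ℓ (v + i * ℓ)
  exact mem_pushed_iff.2 ⟨by omega, by omega, by rw [hdiag]; omega⟩

lemma kStable_of_pushes {n : ℕ} (L : ℕ) (c : ℕ → Set (ℤ × ℕ)) (ord : Fin n → ℤ)
    (hstep : ∀ j : Fin n, c (j + 1) = pushed L (c j) (ord j)) (j : Fin n) :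
    KStable (c n) (ord j) := by
  suffices h : ∀ m : ℕ, (j : ℕ) < m → m ≤ n → KStable (c m) (ord j) from h n j.isLt le_rfl
  intro m hjm hmn
  induction m with
  | zero => omega
  | succ m ih =>
    rw [hstep ⟨m, hmn⟩]
    rcases eq_or_lt_of_le (Nat.le_of_lt_succ hjm) with hj | hj
    · rw [show j = ⟨m, hmn⟩ from Fin.ext hj]
      exact kStable_pushed_self L _ _
    · exact (ih hj (by omega)).pushed L _

theorem stmt14_general (L : ℕ) (c : ℕ → Set (ℤ × ℕ)) (ord : Fin 7 → ℤ)
    (hord : ∀ k : ℤ, k ∈ Finset.Icc (-3 : ℤ) 3 → ∃ j : Fin 7, ord j = k)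
    (hstep : ∀ j : Fin 7, c ((j : ℕ) + 1) = pushed L (c (j : ℕ)) (ord j)) :
    ∀ k ∈ Finset.Icc (-3 : ℤ) 3, KStable (c 7) k := by
  intro k hk
  obtain ⟨j, rfl⟩ := hord k hk
  exact kStable_of_pushes L c ord hstep j

/-- Performing `ℓ`-pushes for each `ℓ ∈ {−3,…,3}` sequentially, in any order,
starting from a `0`-stable configuration, yields a `⟦−3,3⟧`-stable
configuration. -/
theorem stmt14 (L : ℕ) (c : ℕ → Set (ℤ × ℕ)) (ord : Fin 7 → ℤ)
    (hord : ∀ k : ℤ, k ∈ Finset.Icc (-3 : ℤ) 3 → ∃ j : Fin 7, ord j = k)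
    (h0 : SlotsOK L (c 0)) (hstab0 : KStable (c 0) 0)
    (hstep : ∀ j : Fin 7, c ((j : ℕ) + 1) = pushed L (c (j : ℕ)) (ord j)) :
    ∀ k ∈ Finset.Icc (-3 : ℤ) 3, KStable (c 7) k :=
  stmt14_general L c ord hord hstep
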